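/- arXiv:1404.7316 — 5 statements merged into one kernel-verified Lean document; each statement's English description precedes it below -/
import Mathlib

section
/- Let K be a field of characteristic different from 2, let k ≥ 1 be an integer, let c ∈ K with c ≠ 0, and let λ_1, …, λ_k ∈ K. Then the local system of equations Σ_{j=i}^{k} λ_j·λ_{k+i−j} + 2c·λ_i = 0 for all i = 1, …, k holds if and only if either λ_i = 0 for all i = 1, …, k, or λ_k = −2c and λ_i = 0 for all i = 1, …, k−1. -/
/-!
Write `S i = ∑_{j=i}^{k} λ_j λ_{k+i-j}` and `a = 2c`. The top equation `i = k` reads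
`λ_k (λ_k + a) = 0`, so `λ_k ∈ {0, -a}` and in either case `2 λ_k + a = ±a ≠ 0`. Once `λ_j = 0`
for `i < j < k`, only the terms `j = i` and `j = k` survive in `S i`, so the `i`-th equation
becomes `λ_i (2 λ_k + a) = 0`; descending induction on `i` kills every `λ_i` with `i < k`.
-/

open Finset

section

variable {R : Type*} [CommRing R]

theorem sum_Icc_mul_reflect_of_eq_zero (l : ℕ → R) {i k : ℕ} (hik : i < k)
    (hl : ∀ j, i < j → j < k → l j = 0) :
    ∑ j ∈ Icc i k, l j * l (k + i - j) = 2 * l i * l k := by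
  rw [sum_eq_add_of_mem i k (left_mem_Icc.2 hik.le) (right_mem_Icc.2 hik.le) hik.ne
    fun j hj hj' => by rw [hl j (by grind) (by grind), zero_mul]]
  rw [Nat.add_sub_cancel_right, Nat.add_sub_cancel_left]
  ring

theorem local_system_top_iff (l : ℕ → R) (k : ℕ) (a : R) :
    ∑ j ∈ Icc k k, l j * l (k + k - j) + a * l k = 0 ↔ l k * (l k + a) = 0 := by
  rw [Icc_self, sum_singleton, Nat.add_sub_cancel, mul_add, mul_comm a]

theorem local_system_iff_of_eq_zero (l : ℕ → R) {k : ℕ} (a : R) (hk : 1 ≤ k)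
    (hl : ∀ i, 1 ≤ i → i < k → l i = 0) :
    (∀ i ∈ Icc 1 k, ∑ j ∈ Icc i k, l j * l (k + i - j) + a * l i = 0) ↔
      l k * (l k + a) = 0 := by
  refine ⟨fun h => (local_system_top_iff l k a).1 (h k (right_mem_Icc.2 hk)), fun htop i hi => ?_⟩
  obtain ⟨hi1, hik⟩ := mem_Icc.1 hi
  obtain hik | rfl := hik.lt_or_eq
  · rw [sum_Icc_mul_reflect_of_eq_zero l hik fun j hij hjk => hl j (by omega) hjk, hl i hi1 hik]
    ring
  · exact (local_system_top_iff l i a).2 htop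

variable [NoZeroDivisors R]

theorem eq_zero_of_local_system (l : ℕ → R) {k : ℕ} {a : R}
    (h : ∀ i ∈ Icc 1 k, ∑ j ∈ Icc i k, l j * l (k + i - j) + a * l i = 0)
    (hne : 2 * l k + a ≠ 0) {i : ℕ} (hi : 1 ≤ i) (hik : i < k) : l i = 0 := by
  induction hn : k - i using Nat.strong_induction_on generalizing i with
  | _ n ih =>
    have hmid : ∀ j, i < j → j < k → l j = 0 := fun j hij hjk =>
      ih (k - j) (by omega) (by omega) hjk rfl
    have heq := h i (mem_Icc.2 ⟨hi, hik.le⟩)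
    rw [sum_Icc_mul_reflect_of_eq_zero l hik hmid] at heq
    exact (mul_eq_zero.1 (by linear_combination heq : l i * (2 * l k + a) = 0)).resolve_right hne

theorem local_system_iff (l : ℕ → R) (k : ℕ) {a : R} (ha : a ≠ 0) :
    (∀ i ∈ Icc 1 k, ∑ j ∈ Icc i k, l j * l (k + i - j) + a * l i = 0) ↔
      ((∀ i ∈ Icc 1 k, l i = 0) ∨ (l k = -a ∧ ∀ i ∈ Icc 1 (k - 1), l i = 0)) := by
  rcases Nat.eq_zero_or_pos k with rfl | hk
  · simp
  constructor
  · intro h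
    have htop := (local_system_top_iff l k a).1 (h k (right_mem_Icc.2 hk))
    have hne : 2 * l k + a ≠ 0 := by
      rcases mul_eq_zero.1 htop with h0 | h0
      · simpa [h0] using ha
      · simpa [eq_neg_of_add_eq_zero_left h0, two_mul] using ha
    have hlow : ∀ i, 1 ≤ i → i < k → l i = 0 := fun _ => eq_zero_of_local_system l h hne
    rcases mul_eq_zero.1 htop with h0 | h0
    · refine .inl fun i hi => ?_
      obtain ⟨hi1, hik⟩ := mem_Icc.1 hi
      obtain hik | rfl := hik.lt_or_eq
      exacts [hlow i hi1 hik, h0]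
    · exact .inr ⟨eq_neg_of_add_eq_zero_left h0, fun i hi => hlow i (mem_Icc.1 hi).1 (by grind)⟩
  · rintro (hzero | ⟨htop, hzero⟩)
    · rw [local_system_iff_of_eq_zero l a hk fun i hi hik => hzero i (by grind)]
      simp [hzero k (right_mem_Icc.2 hk)]
    · rw [local_system_iff_of_eq_zero l a hk fun i hi hik => hzero i (by grind)]
      simp [htop]

end

theorem stmt0_general (K : Type*) [Field K] (hchar : (2 : K) ≠ 0)
    (k : ℕ) (c : K) (hc : c ≠ 0) (l : ℕ → K) :
    (∀ i ∈ Finset.Icc 1 k,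
        (∑ j ∈ Finset.Icc i k, l j * l (k + i - j)) + 2 * c * l i = 0) ↔
      ((∀ i ∈ Finset.Icc 1 k, l i = 0) ∨
        (l k = -2 * c ∧ ∀ i ∈ Finset.Icc 1 (k - 1), l i = 0)) := by
  rw [neg_mul]
  exact local_system_iff l k (mul_ne_zero hchar hc)

/-- Case 1 (`c ≠ 0`) of the local computation in the proof of the main theorem:
for a field `K` of characteristic `≠ 2`, `k ≥ 1`, `c ≠ 0` and `λ_1, …, λ_k ∈ K`,
the local system of equations `∑_{j=i}^{k} λ_j λ_{k+i-j} + 2 c λ_i = 0` (for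
`i = 1, …, k`) holds iff either all `λ_i = 0`, or `λ_k = -2c` and `λ_i = 0` for
`i = 1, …, k-1`. -/
theorem stmt0 (K : Type*) [Field K] (hchar : (2 : K) ≠ 0)
    (k : ℕ) (hk : 1 ≤ k) (c : K) (hc : c ≠ 0) (l : ℕ → K) :
    (∀ i ∈ Finset.Icc 1 k,
        (∑ j ∈ Finset.Icc i k, l j * l (k + i - j)) + 2 * c * l i = 0) ↔
      ((∀ i ∈ Finset.Icc 1 k, l i = 0) ∨
        (l k = -2 * c ∧ ∀ i ∈ Finset.Icc 1 (k - 1), l i = 0)) :=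
  stmt0_general K hchar k c hc l
end

section
/- Let K be a field, let k ≥ 1 be an integer, and let λ_1, …, λ_k ∈ K. Then the local system of equations with c = 0, namely Σ_{j=i}^{k} λ_j·λ_{k+i−j} = 0 for all i = 1, …, k, holds if and only if λ_i = 0 for all i with ⌊k/2⌋ < i ≤ k (equivalently, only λ_1, …, λ_{⌊k/2⌋} may be nonzero, and these may be arbitrary). -/
/-!
Every term `λ_j λ_{k+i-j}` pairs two indices summing to `k + i > k`, so one of them exceeds `⌊k/2⌋`;
this gives the easy direction. Conversely, if `λ` already vanishes above `m > ⌊k/2⌋`, the equation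
with `i = 2m - k` collapses to `λ_m² = 0`, so `λ_m = 0` and a downward induction finishes.
-/

open Finset

theorem sum_Icc_mul_reflect_eq_zero {R : Type*} [NonUnitalNonAssocSemiring R] (l : ℕ → R)
    {i k : ℕ} (hi : 1 ≤ i) (hl : ∀ j, k / 2 < j → j ≤ k → l j = 0) :
    ∑ j ∈ Icc i k, l j * l (k + i - j) = 0 := by
  refine sum_eq_zero fun j hj => ?_
  rw [mem_Icc] at hj
  rcases le_or_gt j (k / 2) with hj_low | hj_high
  · rw [hl (k + i - j) (by omega) (by omega), mul_zero]
  · rw [hl j hj_high hj.2, zero_mul]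

theorem sum_Icc_mul_reflect_eq_mul_self {R : Type*} [NonUnitalNonAssocSemiring R] (l : ℕ → R)
    {i k m : ℕ} (hm : k + i = 2 * m) (hik : i ≤ k) (hl : ∀ j, m < j → j ≤ k → l j = 0) :
    ∑ j ∈ Icc i k, l j * l (k + i - j) = l m * l m := by
  rw [sum_eq_single_of_mem m (mem_Icc.mpr ⟨by omega, by omega⟩)]
  · rw [show k + i - m = m by omega]
  · intro j hj hjm
    rw [mem_Icc] at hj
    rcases lt_or_gt_of_ne hjm with hj_low | hj_high
    · rw [hl (k + i - j) (by omega) (by omega), mul_zero]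
    · rw [hl j hj_high hj.2, zero_mul]

theorem eq_zero_of_sum_Icc_mul_reflect_eq_zero {R : Type*} [NonUnitalNonAssocSemiring R]
    [NoZeroDivisors R] (l : ℕ → R) {k : ℕ}
    (hsum : ∀ i ∈ Icc 1 k, ∑ j ∈ Icc i k, l j * l (k + i - j) = 0) :
    ∀ j, k / 2 < j → j ≤ k → l j = 0 := by
  refine Nat.decreasingInduction' (P := fun m => ∀ j, m < j → j ≤ k → l j = 0)
    (fun m hmk hkm hvanish j hmj hjk => ?_) (Nat.div_le_self k 2) (fun j hkj hjk => by omega)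
  rcases (Nat.succ_le_of_lt hmj).eq_or_lt with rfl | hj
  · have hsq := hsum (2 * (m + 1) - k) (mem_Icc.mpr ⟨by omega, by omega⟩)
    rw [sum_Icc_mul_reflect_eq_mul_self l (by omega) (by omega) hvanish] at hsq
    exact mul_self_eq_zero.mp hsq
  · exact hvanish j hj hjk

theorem stmt1_general (K : Type*) [Field K] (k : ℕ) (l : ℕ → K) :
    (∀ i ∈ Finset.Icc 1 k, (∑ j ∈ Finset.Icc i k, l j * l (k + i - j)) = 0) ↔
      (∀ i, k / 2 < i → i ≤ k → l i = 0) :=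
  ⟨eq_zero_of_sum_Icc_mul_reflect_eq_zero l,
    fun hl _ hi => sum_Icc_mul_reflect_eq_zero l (mem_Icc.mp hi).1 hl⟩

/-- Case 2 (`c = 0`) of the local computation in the proof of the main theorem:
for a field `K`, `k ≥ 1` and `λ_1, …, λ_k ∈ K`, the local system of equations
with `c = 0`, namely `∑_{j=i}^{k} λ_j λ_{k+i-j} = 0` for `i = 1, …, k`, holds
iff `λ_i = 0` for all `i` with `⌊k/2⌋ < i ≤ k`. -/
theorem stmt1 (K : Type*) [Field K] (k : ℕ) (hk : 1 ≤ k) (l : ℕ → K) :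
    (∀ i ∈ Finset.Icc 1 k, (∑ j ∈ Finset.Icc i k, l j * l (k + i - j)) = 0) ↔
      (∀ i, k / 2 < i → i ≤ k → l i = 0) :=
  stmt1_general K k l
end

section
/- Let K be a field of characteristic different from 2 and let k ≥ 1 be an integer. In the field K((t)) of formal Laurent series over K, let f be a nonzero Laurent series of order exactly k (a power series vanishing to order k), let g be a Laurent series of order 0 (a power series with nonzero constant term), and let β₁ be a Laurent series of order exactly −1. Assume that t^{−k}·(f·β₁^k − g) is regular, i.e., f·β₁^k − g is a power series vanishing to order at least k. Let c, λ_1, …, λ_k ∈ K and set β := Σ_{i=1}^{k} λ_i·β₁^i. Then (1/2)·f·β² + c·g·β is regular (a formal power series) if and only if the local system of equations Σ_{j=i}^{k} λ_j·λ_{k+i−j} + 2c·λ_i = 0 holds for all i = 1, …, k. -/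
open LaurentSeries HahnSeries

/-!
Work modulo `K[[t]]`. Since `f β₁^k ≡ g` modulo `t^k K[[t]]` and `β₁` has order `-1`, every
monomial `f β₁^n` with `n ≤ 2k` is congruent to `g β₁^(n-k)` when `n > k` and to `0` otherwise.
Expanding `β²`, this makes `2 · ((1/2) f β² + c g β)` congruent to `∑ₘ Eₘ g β₁^m`, where `Eₘ` is
the left-hand side of the `m`-th equation of the local system. The series `g β₁^m` have the
distinct orders `-m < 0`, so such a combination is regular only if all `Eₘ` vanish.
-/

namespace LaurentSeries

/- Instance search does not find these through `Algebra R R⸨X⸩`: it resolves to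
`HahnSeries.powerSeriesAlgebra`, whose scalar action is not syntactically the coefficientwise
one. -/
instance {R : Type*} [Semiring R] : IsScalarTower R (LaurentSeries R) (LaurentSeries R) :=
  ⟨fun r x y => by simp only [smul_eq_mul, ← C_mul_eq_smul, mul_assoc]⟩

instance {R : Type*} [CommSemiring R] : SMulCommClass R (LaurentSeries R) (LaurentSeries R) :=
  ⟨fun r x y => by simp only [smul_eq_mul, ← C_mul_eq_smul, mul_left_comm]⟩

section Semiring

variable {R : Type*} [Semiring R]

variable (R) in
/-- The submodule `t^d R[[t]]`; a Laurent series is regular iff it lies in `vanishingBelow R 0`. -/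
def vanishingBelow (d : ℤ) : Submodule R (LaurentSeries R) where
  carrier := {x | ∀ n < d, x.coeff n = 0}
  add_mem' hx hy n hn := by simp [hx n hn, hy n hn]
  zero_mem' _ _ := rfl
  smul_mem' r x hx n hn := by simp [hx n hn]

variable {d e : ℤ} {x y : LaurentSeries R}

theorem vanishingBelow_antitone : Antitone (vanishingBelow R) :=
  fun _ _ h _ hx n hn => hx n (hn.trans_le h)

theorem mul_mem_vanishingBelow (hx : x ∈ vanishingBelow R d) (hy : y ∈ vanishingBelow R e) :
    x * y ∈ vanishingBelow R (d + e) := by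
  intro n hn
  rw [coeff_mul]
  refine Finset.sum_eq_zero fun ⟨i, j⟩ hij => ?_
  obtain ⟨-, -, rfl⟩ := Finset.mem_antidiagonal.mp hij
  rcases lt_or_ge i d with hi | hi
  · simp [hx i hi]
  · simp [hy j (by omega)]

theorem coeff_mul_of_mem_vanishingBelow (hx : x ∈ vanishingBelow R d)
    (hy : y ∈ vanishingBelow R e) : (x * y).coeff (d + e) = x.coeff d * y.coeff e := by
  rw [coeff_mul, Finset.sum_eq_single (d, e)]
  · rintro ⟨i, j⟩ hij hne
    obtain ⟨-, -, hsum⟩ := Finset.mem_antidiagonal.mp hij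
    rcases lt_trichotomy i d with hi | rfl | hi
    · simp [hx i hi]
    · exact (hne (Prod.ext rfl (by simpa using hsum))).elim
    · simp [hy j (by omega)]
  · intro h
    contrapose! h
    exact Finset.mem_antidiagonal.mpr ⟨left_ne_zero_of_mul h, right_ne_zero_of_mul h, rfl⟩

theorem pow_mem_vanishingBelow (hx : x ∈ vanishingBelow R d) :
    ∀ n : ℕ, x ^ n ∈ vanishingBelow R (n * d)
  | 0 => fun n hn => by rw [pow_zero, coeff_one, if_neg (by simpa using hn.ne)]
  | n + 1 => by
    simpa [pow_succ, add_one_mul] using mul_mem_vanishingBelow (pow_mem_vanishingBelow hx n) hx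

theorem coeff_pow_of_mem_vanishingBelow (hx : x ∈ vanishingBelow R d) :
    ∀ n : ℕ, (x ^ n).coeff (n * d) = x.coeff d ^ n
  | 0 => by simp
  | n + 1 => by
    rw [pow_succ, Nat.cast_succ, add_one_mul,
      coeff_mul_of_mem_vanishingBelow (pow_mem_vanishingBelow hx n) hx,
      coeff_pow_of_mem_vanishingBelow hx n, pow_succ]

/- Triangularity: the coefficient at `-M`, for `M` the largest index, sees only the `M`-th term. -/
theorem eq_zero_of_sum_smul_mem_vanishingBelow [NoZeroDivisors R] {y : ℕ → LaurentSeries R}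
    (hy : ∀ m : ℕ, y m ∈ vanishingBelow R (-m)) (hy' : ∀ m : ℕ, (y m).coeff (-m) ≠ 0)
    (a : ℕ → R) {s : Finset ℕ} (hs : ∀ m ∈ s, 0 < m)
    (h : ∑ m ∈ s, a m • y m ∈ vanishingBelow R 0) : ∀ m ∈ s, a m = 0 := by
  induction s using Finset.induction_on_max with
  | empty => simp
  | insert M s hlt ih =>
    have hM : a M = 0 := by
      have hrest : ∑ m ∈ s, a m • y m ∈ vanishingBelow R (-M + 1) :=
        Submodule.sum_mem _ fun m hm =>
          Submodule.smul_mem _ _ (vanishingBelow_antitone (by have := hlt m hm; omega) (hy m))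
      have h0 := h (-M) (by have := hs M (by simp); omega)
      rw [Finset.sum_insert (fun hMs => (hlt M hMs).false), coeff_add, hrest (-M) (by omega),
        add_zero, coeff_smul, smul_eq_mul] at h0
      exact (mul_eq_zero.mp h0).resolve_right (hy' M)
    rw [Finset.sum_insert (fun hMs => (hlt M hMs).false), hM, zero_smul, zero_add] at h
    simpa [hM] using ih (fun m hm => hs m (by simp [hm])) h

end Semiring

end LaurentSeries

theorem Finset.sum_Icc_sum_Icc_ite_lt_add {M : Type*} [AddCommMonoid M] (k : ℕ)
    (G : ℕ → ℕ → ℕ → M) :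
    ∑ i ∈ Icc 1 k, ∑ j ∈ Icc 1 k, (if k < i + j then G i j (i + j - k) else 0) =
      ∑ m ∈ Icc 1 k, ∑ i ∈ Icc m k, G i (k + m - i) m := by
  rw [← Finset.sum_product' (f := fun i j => if k < i + j then G i j (i + j - k) else 0),
    ← Finset.sum_filter, Finset.sum_sigma']
  refine Finset.sum_nbij' (fun p => ⟨p.1 + p.2 - k, p.1⟩) (fun x => (x.2, k + x.1 - x.2))
    ?_ ?_ ?_ ?_ ?_
  all_goals simp only [Finset.mem_filter, Finset.mem_product, Finset.mem_sigma, Finset.mem_Icc]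
  · rintro ⟨i, j⟩ hij
    simp only at hij ⊢
    omega
  · rintro ⟨m, i⟩ hmi
    simp only at hmi ⊢
    omega
  · rintro ⟨i, j⟩ hij
    simp only [Prod.mk.injEq, true_and] at hij ⊢
    omega
  · rintro ⟨m, i⟩ hmi
    simp only [Sigma.mk.injEq, heq_iff_eq, and_true] at hmi ⊢
    omega
  · rintro ⟨i, j⟩ hij
    simp only at hij ⊢
    rw [show k + (i + j - k) - i = j by omega]

theorem mul_sq_sum_smul_pow {R A : Type*} [CommSemiring R] [CommSemiring A] [Module R A]
    [IsScalarTower R A A] [SMulCommClass R A A] (x y : A) (a : ℕ → R) (s : Finset ℕ) :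
    x * (∑ i ∈ s, a i • y ^ i) ^ 2 = ∑ i ∈ s, ∑ j ∈ s, (a i * a j) • (x * y ^ (i + j)) := by
  rw [sq, Finset.sum_mul_sum, Finset.mul_sum]
  refine Finset.sum_congr rfl fun i _ => ?_
  rw [Finset.mul_sum]
  refine Finset.sum_congr rfl fun j _ => ?_
  rw [smul_mul_smul_comm, ← _root_.pow_add, mul_smul_comm]

namespace LaurentSeries

variable {K : Type*} [Field K] {k : ℕ} {f g b : LaurentSeries K}

theorem mkQ_mul_pow (hf : f ∈ vanishingBelow K k) (hb : b ∈ vanishingBelow K (-1))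
    (hfg : f * b ^ k - g ∈ vanishingBelow K k) {n : ℕ} (hn : n ≤ 2 * k) :
    (vanishingBelow K 0).mkQ (f * b ^ n) =
      if k < n then (vanishingBelow K 0).mkQ (g * b ^ (n - k)) else 0 := by
  have hpow (m : ℕ) : b ^ m ∈ vanishingBelow K (-m) := by
    simpa using pow_mem_vanishingBelow hb m
  split_ifs with hkn
  · rw [← sub_eq_zero, ← map_sub, Submodule.mkQ_apply, Submodule.Quotient.mk_eq_zero]
    have hfactor : f * b ^ n - g * b ^ (n - k) = (f * b ^ k - g) * b ^ (n - k) := by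
      rw [sub_mul, mul_assoc, ← _root_.pow_add, Nat.add_sub_cancel' hkn.le]
    rw [hfactor]
    exact vanishingBelow_antitone (by omega) (mul_mem_vanishingBelow hfg (hpow _))
  · rw [Submodule.mkQ_apply, Submodule.Quotient.mk_eq_zero]
    exact vanishingBelow_antitone (by omega) (mul_mem_vanishingBelow hf (hpow n))

theorem mkQ_mul_sq_sum (hf : f ∈ vanishingBelow K k) (hb : b ∈ vanishingBelow K (-1))
    (hfg : f * b ^ k - g ∈ vanishingBelow K k) (l : ℕ → K) :
    (vanishingBelow K 0).mkQ (f * (∑ i ∈ Finset.Icc 1 k, l i • b ^ i) ^ 2) =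
      ∑ m ∈ Finset.Icc 1 k, (∑ i ∈ Finset.Icc m k, l i * l (k + m - i)) •
        (vanishingBelow K 0).mkQ (g * b ^ m) := by
  rw [mul_sq_sum_smul_pow, map_sum]
  calc _ = ∑ i ∈ Finset.Icc 1 k, ∑ j ∈ Finset.Icc 1 k, if k < i + j then
          (l i * l j) • (vanishingBelow K 0).mkQ (g * b ^ (i + j - k)) else 0 := by
        refine Finset.sum_congr rfl fun i hi => ?_
        rw [map_sum]
        refine Finset.sum_congr rfl fun j hj => ?_
        rw [Finset.mem_Icc] at hi hj
        rw [map_smul, mkQ_mul_pow hf hb hfg (by omega), smul_ite, smul_zero]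
    _ = _ := by
        rw [Finset.sum_Icc_sum_Icc_ite_lt_add k
          (fun i j m => (l i * l j) • (vanishingBelow K 0).mkQ (g * b ^ m))]
        simp only [Finset.sum_smul]

theorem two_smul_mkQ_half_mul_sq_add_smul_mul (h2 : (2 : K) ≠ 0)
    (hf : f ∈ vanishingBelow K k) (hb : b ∈ vanishingBelow K (-1))
    (hfg : f * b ^ k - g ∈ vanishingBelow K k) (c : K) (l : ℕ → K) :
    (2 : K) • (vanishingBelow K 0).mkQ ((2 : K)⁻¹ • (f * (∑ i ∈ Finset.Icc 1 k, l i • b ^ i) ^ 2)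
        + c • (g * ∑ i ∈ Finset.Icc 1 k, l i • b ^ i)) =
      ∑ m ∈ Finset.Icc 1 k, ((∑ i ∈ Finset.Icc m k, l i * l (k + m - i)) + 2 * c * l m) •
        (vanishingBelow K 0).mkQ (g * b ^ m) := by
  rw [map_add, map_smul, map_smul, mkQ_mul_sq_sum hf hb hfg]
  simp only [Finset.mul_sum, mul_smul_comm, map_sum, map_smul, add_smul, Finset.sum_add_distrib,
    smul_add, smul_smul, Finset.smul_sum, ← mul_assoc, mul_inv_cancel₀ h2, one_mul]

end LaurentSeries

theorem stmt2_general (K : Type*) [Field K] (hchar : (2 : K) ≠ 0)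
    (k : ℕ)
    (f g β₁ : LaurentSeries K)
    -- `f` is a power series vanishing to order exactly `k`
    (hf₀ : ∀ n : ℤ, n < (k : ℤ) → f.coeff n = 0)
    -- `g` is a power series with nonzero constant term
    (hg₀ : ∀ n : ℤ, n < 0 → g.coeff n = 0) (hg : g.coeff 0 ≠ 0)
    -- `β₁` has order exactly `-1`
    (hβ₁ : ∀ n : ℤ, n < -1 → β₁.coeff n = 0) (hβ₁' : β₁.coeff (-1) ≠ 0)
    -- `t^{-k}·(f·β₁^k - g)` is regular
    (hreg : ∀ n : ℤ, n < (k : ℤ) → (f * β₁ ^ k - g).coeff n = 0)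
    (c : K) (l : ℕ → K)
    (β : LaurentSeries K) (hβ : β = ∑ i ∈ Finset.Icc 1 k, l i • β₁ ^ i) :
    (∀ n : ℤ, n < 0 → ((2 : K)⁻¹ • (f * β ^ 2) + c • (g * β)).coeff n = 0) ↔
      (∀ i ∈ Finset.Icc 1 k,
        (∑ j ∈ Finset.Icc i k, l j * l (k + i - j)) + 2 * c * l i = 0) := by
  have hq (m : ℕ) : g * β₁ ^ m ∈ vanishingBelow K (-m) := by
    simpa using mul_mem_vanishingBelow (d := 0) hg₀ (pow_mem_vanishingBelow (d := -1) hβ₁ m)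
  have hq' (m : ℕ) : (g * β₁ ^ m).coeff (-m) ≠ 0 := by
    have hlead := coeff_mul_of_mem_vanishingBelow (d := 0) hg₀
      (pow_mem_vanishingBelow (d := -1) hβ₁ m)
    rw [coeff_pow_of_mem_vanishingBelow hβ₁, zero_add, mul_neg_one] at hlead
    exact hlead ▸ mul_ne_zero hg (pow_ne_zero m hβ₁')
  subst hβ
  calc _ ↔ (vanishingBelow K 0).mkQ _ = 0 := (Submodule.Quotient.mk_eq_zero _).symm
    _ ↔ ∑ m ∈ Finset.Icc 1 k, ((∑ j ∈ Finset.Icc m k, l j * l (k + m - j)) + 2 * c * l m) •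
          (g * β₁ ^ m) ∈ vanishingBelow K 0 := by
        rw [← smul_eq_zero_iff_right hchar,
          two_smul_mkQ_half_mul_sq_add_smul_mul hchar hf₀ hβ₁ hreg]
        simp only [← map_smul, ← map_sum]
        exact Submodule.Quotient.mk_eq_zero _
    _ ↔ _ := ⟨eq_zero_of_sum_smul_mem_vanishingBelow hq hq' _ fun m hm => (Finset.mem_Icc.mp hm).1,
          fun h => Submodule.sum_mem _ fun m hm => by rw [h m hm, zero_smul]; exact zero_mem _⟩

/-- The central local computation in the proof of the main theorem: with
`f` of order exactly `k ≥ 1`, `g` of order `0`, `β₁` of order exactly `-1`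
in `K((t))`, and `t^{-k}·(f·β₁^k - g)` regular, the Laurent series
`(1/2)·f·β² + c·g·β` with `β = ∑_{i=1}^{k} λ_i β₁^i` is regular (a power
series) iff the local system of equations
`∑_{j=i}^{k} λ_j λ_{k+i-j} + 2 c λ_i = 0`, `i = 1, …, k`, holds. -/
theorem stmt2 (K : Type*) [Field K] (hchar : (2 : K) ≠ 0)
    (k : ℕ) (hk : 1 ≤ k)
    (f g β₁ : LaurentSeries K)
    -- `f` is a power series vanishing to order exactly `k`
    (hf₀ : ∀ n : ℤ, n < (k : ℤ) → f.coeff n = 0) (hfk : f.coeff (k : ℤ) ≠ 0)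
    -- `g` is a power series with nonzero constant term
    (hg₀ : ∀ n : ℤ, n < 0 → g.coeff n = 0) (hg : g.coeff 0 ≠ 0)
    -- `β₁` has order exactly `-1`
    (hβ₁ : ∀ n : ℤ, n < -1 → β₁.coeff n = 0) (hβ₁' : β₁.coeff (-1) ≠ 0)
    -- `t^{-k}·(f·β₁^k - g)` is regular
    (hreg : ∀ n : ℤ, n < (k : ℤ) → (f * β₁ ^ k - g).coeff n = 0)
    (c : K) (l : ℕ → K)
    (β : LaurentSeries K) (hβ : β = ∑ i ∈ Finset.Icc 1 k, l i • β₁ ^ i) :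
    (∀ n : ℤ, n < 0 → ((2 : K)⁻¹ • (f * β ^ 2) + c • (g * β)).coeff n = 0) ↔
      (∀ i ∈ Finset.Icc 1 k,
        (∑ j ∈ Finset.Icc i k, l j * l (k + i - j)) + 2 * c * l i = 0) :=
  stmt2_general K hchar k f g β₁ hf₀ hg₀ hg hβ₁ hβ₁' hreg c l β hβ
end

section
/- Let K be a field and let k ≥ 1 be an integer such that k·1 ≠ 0 in K (the characteristic of K does not divide k). Let F be a formal Laurent series over K of order exactly −k whose leading coefficient (the coefficient of t^{−k}) equals 1. Then there exists a Laurent series β over K of order exactly −1 such that β^k − F is regular, i.e., β^k and F have the same principal part. -/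
open LaurentSeries HahnSeries

/-! Write `F = t^(-k) G` with `G` a power series of constant term `1`. As `k` is invertible, `1` is
a simple root of `Y^k - 1` modulo `t`, so Hensel's lemma in the `t`-adically complete ring `K⟦t⟧`
gives `h` with `h^k = G` and `h(0) = 1`; then `β = t⁻¹ h` satisfies `β^k = F` exactly. -/

namespace PowerSeries

theorem exists_pow_eq_of_constantCoeff_eq_one {R : Type*} [CommRing R] {k : ℕ} (hk : k ≠ 0)
    (hunit : IsUnit (k : R)) {G : R⟦X⟧} (hG : constantCoeff G = 1) :
    ∃ h : R⟦X⟧, h ^ k = G ∧ constantCoeff h = 1 := by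
  have hmem : ∀ φ : R⟦X⟧, φ ∈ Ideal.span {X} ↔ constantCoeff φ = 0 := fun φ ↦
    Ideal.mem_span_singleton.trans X_dvd_iff
  obtain ⟨h, hroot, hh⟩ := HenselianRing.is_henselian (I := Ideal.span {(X : R⟦X⟧)})
    (Polynomial.X ^ k - Polynomial.C G) (Polynomial.monic_X_pow_sub_C G hk) 1
    (by simp [hmem, hG])
    (by
      simpa [Polynomial.derivative_X_pow] using
        (hunit.map (C (R := R))).map (Ideal.Quotient.mk _))
  refine ⟨h, ?_, ?_⟩
  · simpa [sub_eq_zero] using hroot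
  · simpa [hmem, sub_eq_zero] using hh

end PowerSeries

theorem HahnSeries.order_eq_of_forall_lt_of_coeff_ne_zero {Γ R : Type*} [LinearOrder Γ] [Zero Γ]
    [Zero R] {x : R⟦Γ⟧} {i : Γ} (hlt : ∀ j < i, x.coeff j = 0) (hi : x.coeff i ≠ 0) : x.order = i :=
  le_antisymm (order_le_of_coeff_ne_zero hi)
    ((le_order_iff_forall (ne_zero_of_coeff_ne_zero hi)).2 hlt)

namespace LaurentSeries

theorem exists_pow_eq_of_order_eq_neg {R : Type*} [CommRing R] {k : ℕ} (hk : k ≠ 0)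
    (hunit : IsUnit (k : R)) {F : LaurentSeries R} (hord : F.order = -k)
    (hlead : F.coeff (-k) = 1) :
    ∃ h : PowerSeries R, PowerSeries.constantCoeff h = 1 ∧
      (single (-1) 1 * ofPowerSeries ℤ R h) ^ k = F := by
  have hG : PowerSeries.constantCoeff F.powerSeriesPart = 1 := by
    simpa [← PowerSeries.coeff_zero_eq_constantCoeff_apply, hord] using hlead
  obtain ⟨h, hpow, hh⟩ := PowerSeries.exists_pow_eq_of_constantCoeff_eq_one hk hunit hG
  refine ⟨h, hh, ?_⟩
  rw [mul_pow, single_pow, one_pow, ← map_pow, hpow, nsmul_eq_mul, mul_neg_one, ← hord]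
  exact single_order_mul_powerSeriesPart F

end LaurentSeries

theorem stmt3_general (K : Type*) [Field K] (k : ℕ) (hchar : (k : K) ≠ 0)
    (F : LaurentSeries K)
    (hF₀ : ∀ n : ℤ, n < -(k : ℤ) → F.coeff n = 0) (hFk : F.coeff (-(k : ℤ)) = 1) :
    ∃ β : LaurentSeries K,
      (∀ n : ℤ, n < -1 → β.coeff n = 0) ∧ β.coeff (-1) ≠ 0 ∧
        (∀ n : ℤ, n < 0 → (β ^ k - F).coeff n = 0) := by
  have hk : k ≠ 0 := by
    rintro rfl
    exact hchar Nat.cast_zero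
  obtain ⟨h, hh, hpow⟩ := exists_pow_eq_of_order_eq_neg hk hchar.isUnit
    (order_eq_of_forall_lt_of_coeff_ne_zero hF₀ (hFk ▸ one_ne_zero)) hFk
  refine ⟨single (-1) 1 * ofPowerSeries ℤ K h, fun n hn ↦ ?_, ?_, fun n _ ↦ by simp [hpow]⟩
  · rw [coeff_single_mul, PowerSeries.coeff_coe, if_pos (by omega), mul_zero]
  · simp [coeff_single_mul, PowerSeries.coeff_coe, hh]

/-- The Claim in the proof of the main theorem: if the characteristic of `K`
does not divide `k ≥ 1`, and `F ∈ K((t))` has order exactly `-k` with leading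
coefficient `1`, then there is a Laurent series `β` of order exactly `-1`
such that `β^k - F` is regular, i.e. `β^k` and `F` have the same principal
part. -/
theorem stmt3 (K : Type*) [Field K] (k : ℕ) (hk : 1 ≤ k) (hchar : (k : K) ≠ 0)
    (F : LaurentSeries K)
    (hF₀ : ∀ n : ℤ, n < -(k : ℤ) → F.coeff n = 0) (hFk : F.coeff (-(k : ℤ)) = 1) :
    ∃ β : LaurentSeries K,
      (∀ n : ℤ, n < -1 → β.coeff n = 0) ∧ β.coeff (-1) ≠ 0 ∧
        (∀ n : ℤ, n < 0 → (β ^ k - F).coeff n = 0) :=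
  stmt3_general K k hchar F hF₀ hFk
end

section
/- For every integer d ≥ 3, the following identity holds in ℤ: 1 − (1 + Σ_{i=1}^{d−2} (−1)^i · Σ_{j=1}^{i} binom(d−1, i+1)·(1 − 3j)·C(d−3−i−j, d−2)) = (3(d−1)(d−2) − 4)·2^{d−3} + 2, where binom(d−1, i+1) is the usual binomial coefficient and C(m, r) for an integer m (possibly negative) and natural number r denotes the integer-valued binomial coefficient m(m−1)⋯(m−r+1)/r! (Mathlib's Ring.choose on ℤ). -/
/-!
Write `n = d - 2`. Since `C(n - 1 - i - j, n) = (-1)ⁿ binom(i + j, n)`, the double sum is, up to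
sign, the coefficient of `xⁿ` in `F(x) = ∑ᵢ (-1)ⁱ binom(n+1, i+1) ∑ⱼ (1 - 3j) (x + 1)^(i+j)`
(`doubleSum n`). Summing the inner sum and then the outer binomial sums in closed form gives
`(x + 1) x² F(x) = -x² + (-1)ⁿ xⁿ⁺¹ M(x)` with `M = doubleSumCofactor n`, because
`1 - (x + 1) = -x` and `1 - (x + 1)² = -x (x + 2)`. Dividing by `x + 1` (alternating partial sums
of coefficients) shows that the coefficient only depends on `M(0)` and `M'(0)`.
-/

open Finset Polynomial

theorem Ring.choose_natCast_sub (n k : ℕ) :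
    Ring.choose ((n : ℤ) - k) (n + 1) = (-1) ^ (n + 1) * (k.choose (n + 1) : ℤ) := by
  rcases le_or_gt (n + 1) k with h | h
  · obtain ⟨l, rfl⟩ := Nat.exists_eq_add_of_le h
    rw [show (n : ℤ) - (n + 1 + l : ℕ) = -((l : ℤ) + 1) by push_cast; ring, Ring.choose_neg,
      show (l : ℤ) + 1 + (n + 1 : ℕ) - 1 = ((n + 1 + l : ℕ) : ℤ) by push_cast; ring,
      Ring.choose_natCast, Units.smul_def, Int.coe_negOnePow_natCast, smul_eq_mul]
  · rw [show (n : ℤ) - k = ((n - k : ℕ) : ℤ) by omega, Ring.choose_natCast,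
      Nat.choose_eq_zero_of_lt (by omega), Nat.choose_eq_zero_of_lt h]
    simp

section ClosedForm

variable {R : Type*} [CommRing R]

theorem sum_Icc_neg_one_pow_mul_succ (f : ℕ → R) (n : ℕ) :
    ∑ i ∈ Icc 1 n, (-1) ^ i * f (i + 1) = f 0 - f 1 - ∑ k ∈ range (n + 2), (-1) ^ k * f k := by
  rw [sum_range_succ', sum_range_succ', ← Ico_add_one_right_eq_Icc, sum_Ico_eq_sum_range,
    Nat.add_sub_cancel]
  simp only [add_comm 1, pow_succ, mul_neg_one, neg_mul, sum_neg_distrib]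
  ring

theorem sum_range_neg_one_pow_mul_choose_mul_pow (n : ℕ) (t : R) :
    ∑ k ∈ range (n + 1), (-1) ^ k * (n.choose k * t ^ k) = (1 - t) ^ n := by
  rw [sub_eq_add_neg, add_comm (1 : R), add_pow]
  refine sum_congr rfl fun k _ => ?_
  rw [neg_pow, one_pow, mul_one]
  ring

theorem sum_range_neg_one_pow_mul_choose_mul_mul_pow (n : ℕ) (t : R) :
    ∑ k ∈ range (n + 2), (-1) ^ k * ((n + 1).choose k * k * t ^ k) =
      -(n + 1) * t * (1 - t) ^ n := by
  rw [sum_range_succ', ← sum_range_neg_one_pow_mul_choose_mul_pow, mul_sum]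
  simp only [Nat.cast_zero, mul_zero, zero_mul, add_zero]
  refine sum_congr rfl fun k _ => ?_
  have h := congrArg (Nat.cast : ℕ → R) (Nat.add_one_mul_choose_eq n k)
  push_cast at h ⊢
  linear_combination (-1) ^ k * t ^ (k + 1) * h

theorem sum_Icc_neg_one_pow_mul_choose_succ_mul_pow (n : ℕ) (t : R) :
    ∑ i ∈ Icc 1 n, (-1) ^ i * ((n + 1).choose (i + 1) * t ^ (i + 1)) =
      1 - (n + 1) * t - (1 - t) ^ (n + 1) := by
  rw [sum_Icc_neg_one_pow_mul_succ (fun k => ((n + 1).choose k : R) * t ^ k),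
    sum_range_neg_one_pow_mul_choose_mul_pow]
  simp

theorem sum_Icc_neg_one_pow_mul_choose_succ_mul_succ_mul_pow (n : ℕ) (t : R) :
    ∑ i ∈ Icc 1 n, (-1) ^ i * ((n + 1).choose (i + 1) * ((i + 1 : ℕ) : R) * t ^ (i + 1)) =
      (n + 1) * t * ((1 - t) ^ n - 1) := by
  rw [sum_Icc_neg_one_pow_mul_succ (fun k => ((n + 1).choose k : R) * k * t ^ k),
    sum_range_neg_one_pow_mul_choose_mul_mul_pow]
  simp only [Nat.choose_zero_right, Nat.choose_one_right, Nat.cast_zero, Nat.cast_one,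
    Nat.cast_add, mul_zero, zero_mul, pow_one, mul_one]
  ring

theorem sq_mul_sum_Icc_one_sub_three_mul_pow (x : R) (i : ℕ) :
    x ^ 2 * ∑ j ∈ Icc 1 i, (1 - 3 * (j : R)) * (x + 1) ^ j =
      (x + 3 * (i + 1)) * (x + 1) ^ (i + 1) - 3 * i * (x + 1) ^ (i + 2) - (x + 3) * (x + 1) := by
  induction i with
  | zero => simp
  | succ i ih =>
    rw [sum_Icc_succ_top (by omega), mul_add, ih]
    push_cast
    ring

def doubleSum (n : ℕ) (x : R) : R :=
  ∑ i ∈ Icc 1 n, (-1) ^ i *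
    ((n + 1).choose (i + 1) * ∑ j ∈ Icc 1 i, (1 - 3 * (j : R)) * (x + 1) ^ (i + j))

def doubleSumCofactor (n : ℕ) (x : R) : R :=
  (4 * x + 3) * (x + 2) ^ (n + 1) - 3 * (n + 1) * (x + 1) ^ 2 * (x + 2) ^ n - (x + 3) * (x + 1)

theorem add_one_mul_sq_mul_doubleSum (n : ℕ) (x : R) :
    (x + 1) * (x ^ 2 * doubleSum n x) =
      -x ^ 2 + (-1) ^ n * x ^ (n + 1) * doubleSumCofactor n x := by
  have summand (i : ℕ) :
      (x + 1) * (x ^ 2 * ∑ j ∈ Icc 1 i, (1 - 3 * (j : R)) * (x + 1) ^ (i + j)) =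
        (4 * x + 3) * ((x + 1) ^ 2) ^ (i + 1)
          - 3 * x * (((i + 1 : ℕ) : R) * ((x + 1) ^ 2) ^ (i + 1))
          - (x + 3) * (x + 1) * (x + 1) ^ (i + 1) := by
    have hfactor : ∑ j ∈ Icc 1 i, (1 - 3 * (j : R)) * (x + 1) ^ (i + j) =
        (x + 1) ^ i * ∑ j ∈ Icc 1 i, (1 - 3 * (j : R)) * (x + 1) ^ j := by
      rw [mul_sum]
      exact sum_congr rfl fun j _ => by ring
    rw [hfactor, ← pow_mul]
    push_cast
    linear_combination (x + 1) ^ (i + 1) * sq_mul_sum_Icc_one_sub_three_mul_pow x i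
  have expand : (x + 1) * (x ^ 2 * doubleSum n x) =
      (4 * x + 3) * ∑ i ∈ Icc 1 n, (-1) ^ i * ((n + 1).choose (i + 1) * ((x + 1) ^ 2) ^ (i + 1))
      - 3 * x * ∑ i ∈ Icc 1 n, (-1) ^ i *
          ((n + 1).choose (i + 1) * ((i + 1 : ℕ) : R) * ((x + 1) ^ 2) ^ (i + 1))
      - (x + 3) * (x + 1) *
          ∑ i ∈ Icc 1 n, (-1) ^ i * ((n + 1).choose (i + 1) * (x + 1) ^ (i + 1)) := by
    simp only [doubleSum, mul_sum (Icc 1 n), ← sum_sub_distrib]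
    refine sum_congr rfl fun i _ => ?_
    linear_combination (-1) ^ i * ((n + 1).choose (i + 1) : R) * summand i
  rw [expand, sum_Icc_neg_one_pow_mul_choose_succ_mul_pow,
    sum_Icc_neg_one_pow_mul_choose_succ_mul_succ_mul_pow,
    sum_Icc_neg_one_pow_mul_choose_succ_mul_pow,
    show 1 - (x + 1) ^ 2 = -(x * (x + 2)) by ring, show 1 - (x + 1) = -x by ring,
    neg_pow, neg_pow (x * (x + 2)), neg_pow x, mul_pow, mul_pow, doubleSumCofactor]
  ring

end ClosedForm

section Coefficients

variable {R : Type*} [CommRing R]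

theorem neg_one_pow_mul_coeff_eq_sum_range_coeff_X_add_one_mul (p : R[X]) (N : ℕ) :
    (-1) ^ N * p.coeff N = ∑ t ∈ range (N + 1), (-1) ^ t * ((X + 1) * p).coeff t := by
  induction N with
  | zero => simp [mul_coeff_zero]
  | succ N ih =>
    rw [sum_range_succ, ← ih, add_mul, one_mul, coeff_add, coeff_X_mul]
    ring

theorem sum_range_neg_one_pow_mul_coeff_X_pow_mul (p : R[X]) (k : ℕ) :
    ∑ t ∈ range (k + 2), (-1) ^ t * (X ^ k * p).coeff t =
      (-1) ^ k * (p.coeff 0 - p.coeff 1) := by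
  rw [sum_range_succ, sum_range_succ, sum_eq_zero fun t ht => by
    rw [coeff_X_pow_mul', if_neg (by simpa using ht), mul_zero]]
  rw [coeff_X_pow_mul', coeff_X_pow_mul', if_pos le_rfl, if_pos (by omega), Nat.sub_self,
    show k + 1 - k = 1 by omega]
  ring

end Coefficients

theorem coeff_doubleSum (n : ℕ) :
    (doubleSum n (X : ℤ[X])).coeff n = ∑ i ∈ Icc 1 n, (-1) ^ i *
      ∑ j ∈ Icc 1 i, ((n + 1).choose (i + 1) : ℤ) * (1 - 3 * (j : ℤ)) * ((i + j).choose n : ℤ) := by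
  have hC (i j : ℕ) : ((-1) ^ i * (n + 1).choose (i + 1) * (1 - 3 * j) : ℤ[X]) =
      C ((-1) ^ i * (n + 1).choose (i + 1) * (1 - 3 * j : ℤ)) := by simp
  simp only [doubleSum, finsetSum_coeff, mul_sum, ← mul_assoc, hC, coeff_C_mul,
    coeff_X_add_one_pow]

theorem neg_one_pow_mul_coeff_doubleSum (n : ℕ) :
    (-1) ^ n * (doubleSum n (X : ℤ[X])).coeff n =
      (doubleSumCofactor n (X : ℤ[X])).coeff 1 - (doubleSumCofactor n (X : ℤ[X])).coeff 0 - 1 := by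
  have h := neg_one_pow_mul_coeff_eq_sum_range_coeff_X_add_one_mul
    (X ^ 2 * doubleSum n (X : ℤ[X])) (n + 2)
  have hsign : ((-1) ^ n * X ^ (n + 1) * doubleSumCofactor n X : ℤ[X]) =
      C ((-1) ^ n) * (X ^ (n + 1) * doubleSumCofactor n X) := by simp [mul_assoc]
  rw [coeff_X_pow_mul, add_one_mul_sq_mul_doubleSum, hsign] at h
  simp only [coeff_add, coeff_neg, coeff_C_mul, mul_add, sum_add_distrib,
    mul_left_comm _ ((-1 : ℤ) ^ n), ← mul_sum, show n + 2 + 1 = n + 1 + 2 from rfl,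
    sum_range_neg_one_pow_mul_coeff_X_pow_mul, coeff_X_pow, mul_neg, mul_ite, mul_one, mul_zero,
    sum_neg_distrib, sum_ite_eq', mem_range, if_pos (show 2 < n + 1 + 2 by omega)] at h
  have hsq : (-1 : ℤ) ^ n * (-1) ^ n = 1 := pow_mul_pow_eq_one n (by norm_num)
  linear_combination h +
    ((doubleSumCofactor n (X : ℤ[X])).coeff 1 - (doubleSumCofactor n (X : ℤ[X])).coeff 0) * hsq

theorem coeff_zero_sub_coeff_one_doubleSumCofactor (k : ℕ) :
    (doubleSumCofactor (k + 1) (X : ℤ[X])).coeff 0 -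
        (doubleSumCofactor (k + 1) (X : ℤ[X])).coeff 1 =
      (3 * (k + 2) * (k + 1) - 4) * 2 ^ k + 1 := by
  have hcoeff_one := taylor_coeff_one (r := (0 : ℤ)) (f := doubleSumCofactor (k + 1) X)
  rw [taylor_zero] at hcoeff_one
  rw [coeff_zero_eq_eval_zero, hcoeff_one]
  simp only [doubleSumCofactor, Nat.cast_add, Nat.cast_one, eval_sub, eval_mul, eval_add,
    eval_ofNat, eval_X, mul_zero, zero_add, eval_pow, eval_natCast, eval_one, one_pow, mul_one,
    derivative_sub, derivative_mul, derivative_add, derivative_ofNat, zero_mul, derivative_X,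
    add_zero, derivative_pow, eq_intCast, Int.cast_add, Int.cast_natCast, Int.cast_one,
    add_tsub_cancel_right, derivative_natCast, derivative_one, Nat.cast_ofNat, Int.cast_ofNat,
    one_mul]
  ring

theorem sum_neg_one_pow_mul_sum_choose_mul_ringChoose (n : ℕ) :
    ∑ i ∈ Icc 1 (n + 1), (-1 : ℤ) ^ i * ∑ j ∈ Icc 1 i, ((n + 2).choose (i + 1) : ℤ) *
        (1 - 3 * (j : ℤ)) * Ring.choose ((n : ℤ) - i - j) (n + 1) =
      -((3 * ((n : ℤ) + 2) * (n + 1) - 4) * 2 ^ n + 2) := by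
  trans (-1) ^ (n + 1) * (doubleSum (n + 1) (X : ℤ[X])).coeff (n + 1)
  · rw [coeff_doubleSum, mul_sum]
    refine sum_congr rfl fun i _ => ?_
    rw [mul_left_comm, Finset.mul_sum _ _ ((-1 : ℤ) ^ (n + 1))]
    congr 1
    refine sum_congr rfl fun j _ => ?_
    rw [sub_sub, ← Nat.cast_add, Ring.choose_natCast_sub]
    ring
  · rw [neg_one_pow_mul_coeff_doubleSum]
    linear_combination -coeff_zero_sub_coeff_one_doubleSumCofactor n

/-- The genus computation for the osculating cone (Section 2): for `d ≥ 3`,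
`1 - (1 + ∑_{i=1}^{d-2} (-1)^i ∑_{j=1}^{i} binom(d-1, i+1)·(1-3j)·C(d-3-i-j, d-2))
  = (3(d-1)(d-2) - 4)·2^{d-3} + 2`,
where `C(m, r)` is the integer-valued generalized binomial coefficient
(`Ring.choose` on `ℤ`). -/
theorem stmt7 (d : ℕ) (hd : 3 ≤ d) :
    1 - (1 + ∑ i ∈ Finset.Icc 1 (d - 2), (-1 : ℤ) ^ i *
        ∑ j ∈ Finset.Icc 1 i, ((d - 1).choose (i + 1) : ℤ) * (1 - 3 * (j : ℤ)) *
          Ring.choose ((d : ℤ) - 3 - (i : ℤ) - (j : ℤ)) (d - 2)) =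
      (3 * ((d : ℤ) - 1) * ((d : ℤ) - 2) - 4) * 2 ^ (d - 3) + 2 := by
  obtain ⟨n, rfl⟩ : ∃ n, d = n + 3 := ⟨d - 3, by omega⟩
  simp only [show n + 3 - 2 = n + 1 by omega, show n + 3 - 1 = n + 2 by omega,
    Nat.add_sub_cancel, Nat.cast_add, Nat.cast_ofNat, add_sub_cancel_right,
    sum_neg_one_pow_mul_sum_choose_mul_ringChoose]
  ring
end
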